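/- arXiv:1901.05401 — 2 statements merged into one kernel-verified Lean document; each statement's English description precedes it below -/
import Mathlib

section
/- For real constants w₀ ≠ 0, t₀ ≠ 0, and s⁻ ≤ s⁺, let R^± = √(w₀² + t₀² + (s^±)²) and R⁰ = √(t₀²+w₀²). Then t₀ ∫_{s⁻}^{s⁺} ds/((t₀²+s²)(w₀²+t₀²+s²)^{3/2}) = (1/|w₀|³)(arctan(s⁺|w₀|/(t₀R⁺)) − arctan(s⁻|w₀|/(t₀R⁻))) − (t₀/w₀²)·(1/(R⁰)²)(s⁺/R⁺ − s⁻/R⁻). -/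
lemma key_deriv (w₀ t₀ : ℝ) (hw : w₀ ≠ 0) (ht : t₀ ≠ 0) (s : ℝ) :
    HasDerivAt (fun x : ℝ =>
        (1 / |w₀| ^ 3) *
          Real.arctan (x * |w₀| / (t₀ * Real.sqrt (w₀ ^ 2 + t₀ ^ 2 + x ^ 2)))
        - (t₀ / w₀ ^ 2) * (1 / (t₀ ^ 2 + w₀ ^ 2)) *
          (x / Real.sqrt (w₀ ^ 2 + t₀ ^ 2 + x ^ 2)))
      (t₀ * (1 / ((t₀ ^ 2 + s ^ 2) * Real.sqrt (w₀ ^ 2 + t₀ ^ 2 + s ^ 2) ^ 3))) s := by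
  have hpos : (0:ℝ) < w₀ ^ 2 + t₀ ^ 2 + s ^ 2 := by positivity
  set R := Real.sqrt (w₀ ^ 2 + t₀ ^ 2 + s ^ 2) with hRdef
  have hRpos : 0 < R := Real.sqrt_pos.mpr hpos
  have hR2 : R ^ 2 = w₀ ^ 2 + t₀ ^ 2 + s ^ 2 := Real.sq_sqrt hpos.le
  have hR3 : R ^ 3 = (w₀ ^ 2 + t₀ ^ 2 + s ^ 2) * R := by
    rw [pow_succ, hR2]
  have hinner : HasDerivAt (fun x : ℝ => w₀ ^ 2 + t₀ ^ 2 + x ^ 2) (2 * s) s := by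
    simpa using ((hasDerivAt_pow 2 s).const_add (w₀ ^ 2 + t₀ ^ 2))
  have hR : HasDerivAt (fun x : ℝ => Real.sqrt (w₀ ^ 2 + t₀ ^ 2 + x ^ 2)) (s / R) s := by
    have := (Real.hasDerivAt_sqrt hpos.ne').comp s hinner
    refine this.congr_deriv ?_
    field_simp
    ring
  have hq : HasDerivAt (fun x : ℝ => x / Real.sqrt (w₀ ^ 2 + t₀ ^ 2 + x ^ 2))
      ((1 * R - s * (s / R)) / R ^ 2) s :=
    (hasDerivAt_id s).div hR hRpos.ne'
  have hnum : HasDerivAt (fun x : ℝ => x * |w₀|) |w₀| s := by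
    simpa using (hasDerivAt_id s).mul_const |w₀|
  have hden : HasDerivAt (fun x : ℝ => t₀ * Real.sqrt (w₀ ^ 2 + t₀ ^ 2 + x ^ 2))
      (t₀ * (s / R)) s := hR.const_mul t₀
  have hdne : t₀ * R ≠ 0 := by positivity
  have hu : HasDerivAt (fun x : ℝ => x * |w₀| / (t₀ * Real.sqrt (w₀ ^ 2 + t₀ ^ 2 + x ^ 2)))
      ((|w₀| * (t₀ * R) - s * |w₀| * (t₀ * (s / R))) / (t₀ * R) ^ 2) s :=
    hnum.div hden hdne
  have harc := (Real.hasDerivAt_arctan (s * |w₀| / (t₀ * R))).comp s hu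
  have hF := (harc.const_mul (1 / |w₀| ^ 3)).sub
      (hq.const_mul ((t₀ / w₀ ^ 2) * (1 / (t₀ ^ 2 + w₀ ^ 2))))
  refine hF.congr_deriv ?_
  have hA : |w₀| ^ 2 = w₀ ^ 2 := sq_abs w₀
  have hApos : 0 < |w₀| := abs_pos.mpr hw
  have ht2 : (0:ℝ) < t₀ ^ 2 + s ^ 2 := by positivity
  have ha' : (0:ℝ) < t₀ ^ 2 + w₀ ^ 2 := by positivity
  have h1u : 1 + (s * |w₀| / (t₀ * R)) ^ 2
      = (t₀ ^ 2 + w₀ ^ 2) * (t₀ ^ 2 + s ^ 2) / (t₀ ^ 2 * R ^ 2) := by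
    rw [hR2]
    field_simp
    linear_combination (s ^ 2 * (w₀ ^ 2 + t₀ ^ 2 + s ^ 2)) * hA - (w₀ ^ 2 * s ^ 2) * hR2
  have hDq : (1 * R - s * (s / R)) / R ^ 2 = (w₀ ^ 2 + t₀ ^ 2) / R ^ 3 := by
    field_simp
    linear_combination hR2
  have hDnum : (|w₀| * (t₀ * R) - s * |w₀| * (t₀ * (s / R))) / (t₀ * R) ^ 2
      = |w₀| * (w₀ ^ 2 + t₀ ^ 2) / (t₀ * R ^ 3) := by
    field_simp
    linear_combination hR2
  have habs3 : |w₀| ^ 3 = w₀ ^ 2 * |w₀| := by rw [← hA]; ring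
  rw [h1u, hDq, hDnum, habs3, hR3, hR2]
  field_simp
  ring

/-- Key line integral of Appendix 3:
`t₀ ∫_{s⁻}^{s⁺} ds/((t₀²+s²)(w₀²+t₀²+s²)^{3/2})
  = (1/|w₀|³)(arctan(s⁺|w₀|/(t₀R⁺)) − arctan(s⁻|w₀|/(t₀R⁻)))
    − (t₀/w₀²)(1/(R⁰)²)(s⁺/R⁺ − s⁻/R⁻)`,
with `R^± = √(w₀² + t₀² + (s^±)²)` and `(R⁰)² = t₀² + w₀²`. -/
theorem line_integral_appendix3 (w₀ t₀ sm sp : ℝ) (hw : w₀ ≠ 0) (ht : t₀ ≠ 0)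
    (hs : sm ≤ sp) :
    t₀ * ∫ s in sm..sp,
        1 / ((t₀ ^ 2 + s ^ 2) * (w₀ ^ 2 + t₀ ^ 2 + s ^ 2) ^ ((3 : ℝ) / 2))
      = (1 / |w₀| ^ 3) *
          (Real.arctan (sp * |w₀| / (t₀ * Real.sqrt (w₀ ^ 2 + t₀ ^ 2 + sp ^ 2)))
            - Real.arctan (sm * |w₀| / (t₀ * Real.sqrt (w₀ ^ 2 + t₀ ^ 2 + sm ^ 2))))
        - (t₀ / w₀ ^ 2) * (1 / (t₀ ^ 2 + w₀ ^ 2)) *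
          (sp / Real.sqrt (w₀ ^ 2 + t₀ ^ 2 + sp ^ 2)
            - sm / Real.sqrt (w₀ ^ 2 + t₀ ^ 2 + sm ^ 2)) := by
  have hrw : ∀ s : ℝ, (w₀ ^ 2 + t₀ ^ 2 + s ^ 2) ^ ((3 : ℝ) / 2)
      = Real.sqrt (w₀ ^ 2 + t₀ ^ 2 + s ^ 2) ^ 3 := by
    intro s
    have hx : (0:ℝ) ≤ w₀ ^ 2 + t₀ ^ 2 + s ^ 2 := by positivity
    rw [Real.sqrt_eq_rpow, ← Real.rpow_natCast ((w₀ ^ 2 + t₀ ^ 2 + s ^ 2) ^ ((1:ℝ)/2)) 3,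
      ← Real.rpow_mul hx]
    norm_num
  have hcongr : (∫ s in sm..sp,
        1 / ((t₀ ^ 2 + s ^ 2) * (w₀ ^ 2 + t₀ ^ 2 + s ^ 2) ^ ((3 : ℝ) / 2)))
      = ∫ s in sm..sp,
        1 / ((t₀ ^ 2 + s ^ 2) * Real.sqrt (w₀ ^ 2 + t₀ ^ 2 + s ^ 2) ^ 3) := by
    apply intervalIntegral.integral_congr
    intro s _
    simp only [hrw]
  have hcont : Continuous (fun s : ℝ =>
      t₀ * (1 / ((t₀ ^ 2 + s ^ 2) * Real.sqrt (w₀ ^ 2 + t₀ ^ 2 + s ^ 2) ^ 3))) := by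
    apply continuous_const.mul
    apply continuous_const.div
    · exact ((continuous_const.add (continuous_pow 2)).mul
        ((Real.continuous_sqrt.comp (by continuity)).pow 3))
    · intro s
      have h1 : (0:ℝ) < t₀ ^ 2 + s ^ 2 := by positivity
      have h2 : (0:ℝ) < Real.sqrt (w₀ ^ 2 + t₀ ^ 2 + s ^ 2) :=
        Real.sqrt_pos.mpr (by positivity)
      positivity
  have hFTC := intervalIntegral.integral_eq_sub_of_hasDerivAt
    (f := fun x : ℝ =>
        (1 / |w₀| ^ 3) *
          Real.arctan (x * |w₀| / (t₀ * Real.sqrt (w₀ ^ 2 + t₀ ^ 2 + x ^ 2)))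
        - (t₀ / w₀ ^ 2) * (1 / (t₀ ^ 2 + w₀ ^ 2)) *
          (x / Real.sqrt (w₀ ^ 2 + t₀ ^ 2 + x ^ 2)))
    (f' := fun s : ℝ =>
        t₀ * (1 / ((t₀ ^ 2 + s ^ 2) * Real.sqrt (w₀ ^ 2 + t₀ ^ 2 + s ^ 2) ^ 3)))
    (a := sm) (b := sp)
    (fun x _ => key_deriv w₀ t₀ hw ht x)
    (hcont.intervalIntegrable sm sp)
  rw [hcongr, ← intervalIntegral.integral_const_mul, hFTC]
  ring
end

section
/- Arctangent subtraction identity: for real w₀, t₀ > 0, s ∈ ℝ, with R⁰ = √(t₀² + w₀²) and R = √(s² + t₀² + w₀²), one has arctan(s/t₀) − arctan(|w₀| s/(t₀ R)) = arctan( t₀ s / ((R⁰)² + |w₀| R) ). -/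
/-! With `x = s/t₀` and `y = |w₀| s/(t₀ R)` we have `x y ≥ 0`, so the subtraction formula for
`arctan` holds on the principal branch. Its argument `(x - y)/(1 + x y)` reduces to
`t₀ s/((R⁰)² + |w₀| R)` because `(R - |w₀|)((R⁰)² + |w₀| R) = t₀² R + |w₀| s²`, by
`R² = s² + (R⁰)²`. -/

namespace Real

theorem arctan_sub {x y : ℝ} (h : -1 < x * y) :
    arctan x - arctan y = arctan ((x - y) / (1 + x * y)) := by
  have hxy : x * -y < 1 := by linarith [mul_neg x y]
  simpa [arctan_neg, ← sub_eq_add_neg, mul_neg] using arctan_add hxy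

theorem arctan_div_sub_arctan_eq {a t s : ℝ} (ha : 0 ≤ a) (ht : t ≠ 0) :
    arctan (s / t) - arctan (a * s / (t * √(s ^ 2 + t ^ 2 + a ^ 2)))
      = arctan (t * s / (t ^ 2 + a ^ 2 + a * √(s ^ 2 + t ^ 2 + a ^ 2))) := by
  set R := √(s ^ 2 + t ^ 2 + a ^ 2)
  have hR_sq : R ^ 2 = s ^ 2 + t ^ 2 + a ^ 2 := sq_sqrt (by positivity)
  have hR : 0 < R := sqrt_pos.mpr (by positivity)
  have hprod : s / t * (a * s / (t * R)) = a * s ^ 2 / (t ^ 2 * R) := by field_simp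
  have hprod_nonneg : 0 ≤ s / t * (a * s / (t * R)) := by rw [hprod]; positivity
  have harg : (s / t - a * s / (t * R)) / (1 + s / t * (a * s / (t * R)))
      = t * s / (t ^ 2 + a ^ 2 + a * R) := by
    have hden : 0 < t ^ 2 + a ^ 2 + a * R := by positivity
    rw [div_eq_div_iff (by linarith) hden.ne']
    field_simp
    linear_combination (s * a) * hR_sq
  rw [arctan_sub (by linarith), harg]

end Real

/-- Arctangent subtraction identity (Wilton et al.): with `R⁰ = √(t₀² + w₀²)` and
`R = √(s² + t₀² + w₀²)`,
`arctan(s/t₀) − arctan(|w₀| s/(t₀ R)) = arctan(t₀ s/((R⁰)² + |w₀| R))`. -/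
theorem arctan_subtraction_identity (w₀ t₀ s : ℝ) (ht : 0 < t₀) :
    Real.arctan (s / t₀)
      - Real.arctan (|w₀| * s / (t₀ * Real.sqrt (s ^ 2 + t₀ ^ 2 + w₀ ^ 2)))
      = Real.arctan (t₀ * s /
          ((t₀ ^ 2 + w₀ ^ 2) + |w₀| * Real.sqrt (s ^ 2 + t₀ ^ 2 + w₀ ^ 2))) := by
  simpa only [sq_abs] using Real.arctan_div_sub_arctan_eq (abs_nonneg w₀) ht.ne' (s := s)
end
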